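/- arXiv:1709.08419 — 3 statements merged into one kernel-verified Lean document; each statement's English description precedes it below -/
import Mathlib

section
/- Let (X,d) be a b-metric space with constant s ≥ 1, G : (0,∞) → (0,∞) with the property that G(α_n) → 0 iff α_n → 0 for all positive sequences, φ : (0,∞) → (0,∞) non-decreasing with φ^n(t) → 0 for all t > 0, and T : X → X satisfying: d(Tx,Ty) ≠ 0 implies G(d(Tx,Ty)) ≤ φ(G(d(x,y))). Let ε₀ > 0 be such that sup_{α<ε₀} G(α) ≤ 1 and inf_{α≥ε} G(α) > 0 for all ε ∈ (0,ε₀). Then for every ε ∈ (0,ε₀) there exists n_ε ∈ ℕ such that for all n ≥ n_ε and all x,y ∈ X with d(x,y) < ε, one has d(T^n x, T^n y) < ε/(2s). -/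
/-!
Along an orbit pair the contraction condition iterates to `G (d (Tⁿx, Tⁿy)) ≤ φⁿ (G (d (x, y)))`
as long as the iterates stay distinct. If `d (x, y) < ε < ε₀` then `G (d (x, y)) ≤ 1`, so by
monotonicity this is at most `φⁿ 1`, which tends to `0` independently of `x, y`. Once `φⁿ 1` drops
below `c = inf_{α ≥ ε/(2s)} G α > 0`, the distance `d (Tⁿx, Tⁿy)` cannot reach `ε/(2s)`.
-/

open Filter Set

theorem MonotoneOn.iterate_of_mapsTo {α : Type*} [Preorder α] {f : α → α} {s : Set α}
    (hmono : MonotoneOn f s) (hmaps : MapsTo f s s) (n : ℕ) : MonotoneOn f^[n] s := by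
  induction n with
  | zero => exact monotoneOn_id
  | succ n ih =>
    rw [Function.iterate_succ']
    exact hmono.comp ih (hmaps.iterate n)

section Contraction

variable {X : Type*} {d : X → X → ℝ} {G φ : ℝ → ℝ} {T : X → X}

theorem iterate_eq_or_le_iterate_of_contraction
    (hnn : ∀ x y, 0 ≤ d x y) (hd0 : ∀ x y, d x y = 0 ↔ x = y)
    (hGpos : ∀ t, 0 < t → 0 < G t)
    (hφmono : MonotoneOn φ (Ioi 0)) (hφpos : MapsTo φ (Ioi 0) (Ioi 0))
    (hcontr : ∀ x y, d (T x) (T y) ≠ 0 → G (d (T x) (T y)) ≤ φ (G (d x y)))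
    (n : ℕ) (x y : X) :
    T^[n] x = T^[n] y ∨ G (d (T^[n] x) (T^[n] y)) ≤ φ^[n] (G (d x y)) := by
  induction n generalizing x y with
  | zero => exact Or.inr le_rfl
  | succ n ih =>
    by_cases hT : T x = T y
    · left
      simp only [Function.iterate_succ_apply, hT]
    have hd : d (T x) (T y) ≠ 0 := fun h => hT ((hd0 _ _).1 h)
    have hGT : 0 < G (d (T x) (T y)) := hGpos _ ((hnn _ _).lt_of_ne' hd)
    simp only [Function.iterate_succ_apply]
    refine (ih (T x) (T y)).imp_right fun h => h.trans ?_
    exact hφmono.iterate_of_mapsTo hφpos n hGT (hGT.trans_le (hcontr x y hd))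
      (hcontr x y hd)

end Contraction

theorem iterate_uniform_small_general
    {X : Type*} (d : X → X → ℝ) (s : ℝ) (hs : 1 ≤ s)
    (hnn : ∀ x y, 0 ≤ d x y)
    (hd0 : ∀ x y, d x y = 0 ↔ x = y)
    (G : ℝ → ℝ) (hGpos : ∀ t, 0 < t → 0 < G t)
    (φ : ℝ → ℝ) (hφpos : ∀ t, 0 < t → 0 < φ t)
    (hφmono : ∀ a b, 0 < a → a ≤ b → φ a ≤ φ b)
    (hφiter : ∀ t, 0 < t → Tendsto (fun n => φ^[n] t) atTop (nhds 0))
    (T : X → X)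
    (hcontr : ∀ x y, d (T x) (T y) ≠ 0 → G (d (T x) (T y)) ≤ φ (G (d x y)))
    (ε₀ : ℝ)
    (hsup : ∀ α, 0 < α → α < ε₀ → G α ≤ 1)
    (hinf : ∀ ε, 0 < ε → ε < ε₀ → ∃ c : ℝ, 0 < c ∧ ∀ α, ε ≤ α → c ≤ G α) :
    ∀ ε, 0 < ε → ε < ε₀ → ∃ nε : ℕ, ∀ n ≥ nε, ∀ x y : X,
      d x y < ε → d (T^[n] x) (T^[n] y) < ε / (2 * s) := by
  intro ε hε hεε₀
  have hφmono' : MonotoneOn φ (Ioi 0) := fun a ha _ _ hab => hφmono a _ ha hab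
  have hδ : 0 < ε / (2 * s) := by positivity
  have hδε : ε / (2 * s) < ε₀ :=
    (div_le_self hε.le (by linarith)).trans_lt hεε₀
  obtain ⟨c, hc, hcG⟩ := hinf _ hδ hδε
  obtain ⟨N, hN⟩ := eventually_atTop.1 ((hφiter 1 one_pos).eventually_lt_const hc)
  refine ⟨N, fun n hn x y hxy => ?_⟩
  by_contra! hfar
  have hTne : T^[n] x ≠ T^[n] y := fun h => by
    rw [h, (hd0 _ _).2 rfl] at hfar
    linarith
  have hxy0 : 0 < d x y :=
    (hnn x y).lt_of_ne' fun h => hTne (by rw [(hd0 x y).1 h])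
  have hGn := (iterate_eq_or_le_iterate_of_contraction hnn hd0 hGpos hφmono' hφpos hcontr n x
    y).resolve_left hTne
  have hG1 : φ^[n] (G (d x y)) ≤ φ^[n] 1 :=
    hφmono'.iterate_of_mapsTo hφpos n (hGpos _ hxy0) (mem_Ioi.2 one_pos)
      (hsup _ hxy0 (hxy.trans hεε₀))
  linarith [hcG _ hfar, hN n hn]

/-- Uniform contraction of iterates on small distances. -/
theorem iterate_uniform_small
    {X : Type*} (d : X → X → ℝ) (s : ℝ) (hs : 1 ≤ s)
    (hnn : ∀ x y, 0 ≤ d x y)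
    (hd0 : ∀ x y, d x y = 0 ↔ x = y)
    (hsymm : ∀ x y, d x y = d y x)
    (htri : ∀ x y z, d x y ≤ s * (d x z + d z y))
    (G : ℝ → ℝ) (hGpos : ∀ t, 0 < t → 0 < G t)
    (hG2 : ∀ α : ℕ → ℝ, (∀ n, 0 < α n) →
      (Tendsto (fun n => G (α n)) atTop (nhds 0) ↔ Tendsto α atTop (nhds 0)))
    (φ : ℝ → ℝ) (hφpos : ∀ t, 0 < t → 0 < φ t)
    (hφmono : ∀ a b, 0 < a → a ≤ b → φ a ≤ φ b)
    (hφiter : ∀ t, 0 < t → Tendsto (fun n => φ^[n] t) atTop (nhds 0))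
    (T : X → X)
    (hcontr : ∀ x y, d (T x) (T y) ≠ 0 → G (d (T x) (T y)) ≤ φ (G (d x y)))
    (ε₀ : ℝ) (hε₀ : 0 < ε₀)
    (hsup : ∀ α, 0 < α → α < ε₀ → G α ≤ 1)
    (hinf : ∀ ε, 0 < ε → ε < ε₀ → ∃ c : ℝ, 0 < c ∧ ∀ α, ε ≤ α → c ≤ G α) :
    ∀ ε, 0 < ε → ε < ε₀ → ∃ nε : ℕ, ∀ n ≥ nε, ∀ x y : X,
      d x y < ε → d (T^[n] x) (T^[n] y) < ε / (2 * s) :=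
  iterate_uniform_small_general d s hs hnn hd0 G hGpos φ hφpos hφmono hφiter T hcontr ε₀ hsup hinf
end

section
/- Let (X,d) be a b-metric space with constant s ≥ 1, G : (0,∞) → (0,∞) such that for every positive sequence (α_n), G(α_n) → 0 iff α_n → 0, φ : (0,∞) → (0,∞) non-decreasing with φ^k(t) → 0 for all t > 0, and T : X → X satisfying: d(Tx,Ty) ≠ 0 implies G(d(Tx,Ty)) ≤ φ(G(d(x,y))). Fix x₀ ∈ X and set x_k = T^k x₀. Then for every n ≥ 1, d(T^n x_{mn}, x_{mn}) → 0 as m → ∞. -/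
/-!
Put `a k = d (T^[k] (T^[n] x₀)) (T^[k] x₀)`, so that the quantity in question is `a (m * n)`.
Once two orbits meet they stay together, so either `a` is eventually `0`, or `a` is positive
throughout; in the latter case the contractive condition applies at every step and gives
`G (a k) ≤ φ^[k] (G (a 0)) → 0`, hence `a k → 0` by the assumption on `G`.
-/

open Filter Topology

theorem Function.iterate_eq_iterate_of_le {α : Type*} (f : α → α) {x y : α} {k j : ℕ}
    (h : f^[k] x = f^[k] y) (hkj : k ≤ j) : f^[j] x = f^[j] y := by
  obtain ⟨i, rfl⟩ := Nat.exists_eq_add_of_le hkj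
  rw [add_comm, Function.iterate_add_apply, Function.iterate_add_apply, h]

theorem le_iterate_of_le_map {φ : ℝ → ℝ} (hφ : MonotoneOn φ (Set.Ioi 0)) {u : ℕ → ℝ}
    (hpos : ∀ k, 0 < u k) (hstep : ∀ k, u (k + 1) ≤ φ (u k)) (k : ℕ) :
    u k ≤ φ^[k] (u 0) := by
  induction k with
  | zero => rfl
  | succ k ih =>
    calc u (k + 1) ≤ φ (u k) := hstep k
      _ ≤ φ (φ^[k] (u 0)) := hφ (hpos k) ((hpos k).trans_le ih) ih
      _ = φ^[k + 1] (u 0) := (Function.iterate_succ_apply' φ k _).symm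

section Contraction

variable {X : Type*} {d : X → X → ℝ} {G φ : ℝ → ℝ} {T : X → X}

theorem tendsto_dist_iterate_of_pos (hGpos : ∀ t, 0 < t → 0 < G t)
    (hG : ∀ α : ℕ → ℝ, (∀ n, 0 < α n) →
      Tendsto (fun n => G (α n)) atTop (𝓝 0) → Tendsto α atTop (𝓝 0))
    (hφ : MonotoneOn φ (Set.Ioi 0)) (hφiter : ∀ t, 0 < t → Tendsto (φ^[·] t) atTop (𝓝 0))
    (hcontr : ∀ x y, d (T x) (T y) ≠ 0 → G (d (T x) (T y)) ≤ φ (G (d x y)))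
    {x y : X} (hpos : ∀ k, 0 < d (T^[k] x) (T^[k] y)) :
    Tendsto (fun k => d (T^[k] x) (T^[k] y)) atTop (𝓝 0) := by
  have hGa_pos : ∀ k, 0 < G (d (T^[k] x) (T^[k] y)) := fun k => hGpos _ (hpos k)
  have hstep : ∀ k, G (d (T^[k + 1] x) (T^[k + 1] y)) ≤ φ (G (d (T^[k] x) (T^[k] y))) := by
    intro k
    have h := hpos (k + 1)
    rw [Function.iterate_succ_apply', Function.iterate_succ_apply'] at h ⊢
    exact hcontr _ _ h.ne'
  have hbound := le_iterate_of_le_map hφ hGa_pos hstep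
  exact hG _ hpos <| tendsto_of_tendsto_of_tendsto_of_le_of_le tendsto_const_nhds
    (hφiter _ (hGa_pos 0)) (fun k => (hGa_pos k).le) hbound

theorem tendsto_dist_iterate (hnn : ∀ x y, 0 ≤ d x y) (hd0 : ∀ x y, d x y = 0 ↔ x = y)
    (hGpos : ∀ t, 0 < t → 0 < G t)
    (hG : ∀ α : ℕ → ℝ, (∀ n, 0 < α n) →
      Tendsto (fun n => G (α n)) atTop (𝓝 0) → Tendsto α atTop (𝓝 0))
    (hφ : MonotoneOn φ (Set.Ioi 0)) (hφiter : ∀ t, 0 < t → Tendsto (φ^[·] t) atTop (𝓝 0))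
    (hcontr : ∀ x y, d (T x) (T y) ≠ 0 → G (d (T x) (T y)) ≤ φ (G (d x y)))
    (x y : X) : Tendsto (fun k => d (T^[k] x) (T^[k] y)) atTop (𝓝 0) := by
  by_cases hmeet : ∃ k, T^[k] x = T^[k] y
  · obtain ⟨k, hk⟩ := hmeet
    refine tendsto_const_nhds.congr' ?_
    filter_upwards [eventually_ge_atTop k] with j hj
    exact ((hd0 _ _).mpr (T.iterate_eq_iterate_of_le hk hj)).symm
  · push Not at hmeet
    refine tendsto_dist_iterate_of_pos hGpos hG hφ hφiter hcontr fun k => ?_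
    exact (hnn _ _).lt_of_ne' fun h => hmeet k ((hd0 _ _).mp h)

end Contraction

theorem picard_subseq_tendsto_general
    {X : Type*} (d : X → X → ℝ)
    (hnn : ∀ x y, 0 ≤ d x y)
    (hd0 : ∀ x y, d x y = 0 ↔ x = y)
    (G : ℝ → ℝ) (hGpos : ∀ t, 0 < t → 0 < G t)
    (hG2 : ∀ α : ℕ → ℝ, (∀ n, 0 < α n) →
      (Tendsto (fun n => G (α n)) atTop (nhds 0) ↔ Tendsto α atTop (nhds 0)))
    (φ : ℝ → ℝ)
    (hφmono : ∀ a b, 0 < a → a ≤ b → φ a ≤ φ b)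
    (hφiter : ∀ t, 0 < t → Tendsto (fun k => φ^[k] t) atTop (nhds 0))
    (T : X → X)
    (hcontr : ∀ x y, d (T x) (T y) ≠ 0 → G (d (T x) (T y)) ≤ φ (G (d x y)))
    (x₀ : X) :
    ∀ n : ℕ, 1 ≤ n →
      Tendsto (fun m => d (T^[n] (T^[m * n] x₀)) (T^[m * n] x₀)) atTop (nhds 0) := by
  intro n hn
  have hφ : MonotoneOn φ (Set.Ioi 0) := fun a ha _ _ hab => hφmono _ _ ha hab
  have horbit := tendsto_dist_iterate hnn hd0 hGpos (fun α hα => (hG2 α hα).mp) hφ hφiter hcontr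
    (T^[n] x₀) x₀
  have hmul : Tendsto (· * n) atTop atTop := tendsto_id.atTop_mul_const' (by omega)
  refine (horbit.comp hmul).congr fun m => ?_
  rw [Function.comp_apply, (Function.Commute.iterate_iterate_self T n (m * n)).eq]

/-- Along the Picard iterates, d(Tⁿ x_{mn}, x_{mn}) → 0 as m → ∞. -/
theorem picard_subseq_tendsto
    {X : Type*} (d : X → X → ℝ) (s : ℝ) (hs : 1 ≤ s)
    (hnn : ∀ x y, 0 ≤ d x y)
    (hd0 : ∀ x y, d x y = 0 ↔ x = y)
    (hsymm : ∀ x y, d x y = d y x)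
    (htri : ∀ x y z, d x y ≤ s * (d x z + d z y))
    (G : ℝ → ℝ) (hGpos : ∀ t, 0 < t → 0 < G t)
    (hG2 : ∀ α : ℕ → ℝ, (∀ n, 0 < α n) →
      (Tendsto (fun n => G (α n)) atTop (nhds 0) ↔ Tendsto α atTop (nhds 0)))
    (φ : ℝ → ℝ) (hφpos : ∀ t, 0 < t → 0 < φ t)
    (hφmono : ∀ a b, 0 < a → a ≤ b → φ a ≤ φ b)
    (hφiter : ∀ t, 0 < t → Tendsto (fun k => φ^[k] t) atTop (nhds 0))
    (T : X → X)
    (hcontr : ∀ x y, d (T x) (T y) ≠ 0 → G (d (T x) (T y)) ≤ φ (G (d x y)))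
    (x₀ : X) :
    ∀ n : ℕ, 1 ≤ n →
      Tendsto (fun m => d (T^[n] (T^[m * n] x₀)) (T^[m * n] x₀)) atTop (nhds 0) :=
  picard_subseq_tendsto_general d hnn hd0 G hGpos hG2 φ hφmono hφiter T hcontr x₀
end

section
/- Let (X,d) be a b-metric space with constant s ≥ 1, G ∈ 𝔾₂ (i.e., G(α_n) → 0 iff α_n → 0 for all positive sequences), φ non-decreasing with φ^n(t) → 0 for all t > 0, T : X → X with the contractive property d(Tx,Ty) ≠ 0 ⟹ G(d(Tx,Ty)) ≤ φ(G(d(x,y))), and let ε₀ be as given by the 𝔾₂ lemma. Fix x₀ ∈ X and let x_k = T^k x₀. Then for every ε ∈ (0,ε₀) there exist n, m ∈ ℕ* such that T^n maps the open ball B(x_{mn}, ε) into itself. -/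
/-!
Iterating the contractive condition gives `G (d (Tⁿu) (Tⁿv)) ≤ φⁿ (G (d u v))` whenever the left
distance is nonzero. On the ball of radius `ε < ε₀` we have `G ≤ 1`, so choosing `n` with
`φⁿ 1 < c ≤ inf_{α ≥ δ} G α`, where `δ = ε / (2s)`, forces `Tⁿ` to map the ball into the
`δ`-ball around `Tⁿ x_{mn}`. The same bound along the orbit shows `d (x_k) (x_{k+1}) → 0`,
hence `d (x_p) (x_{p+n}) → 0`, so some centre `x_{mn}` is `δ`-close to its image `x_{mn+n}`,
and the relaxed triangle inequality closes the argument: `s (δ + δ) = ε`.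
-/

open Filter Topology

section

variable {X : Type*} {d : X → X → ℝ} {s : ℝ} {G φ : ℝ → ℝ} {T : X → X}

theorem G_dist_iterate_le (hnn : ∀ x y, 0 ≤ d x y) (hd0 : ∀ x y, d x y = 0 ↔ x = y)
    (hGpos : ∀ t, 0 < t → 0 < G t) (hφmono : ∀ a b, 0 < a → a ≤ b → φ a ≤ φ b)
    (hcontr : ∀ x y, d (T x) (T y) ≠ 0 → G (d (T x) (T y)) ≤ φ (G (d x y)))
    {u v : X} {b : ℝ} (hb : G (d u v) ≤ b) :
    ∀ n, d (T^[n] u) (T^[n] v) ≠ 0 → G (d (T^[n] u) (T^[n] v)) ≤ φ^[n] b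
  | 0, _ => hb
  | n + 1, hne => by
    rw [Function.iterate_succ_apply', Function.iterate_succ_apply'] at hne ⊢
    have hprev : d (T^[n] u) (T^[n] v) ≠ 0 := fun h =>
      hne (by rw [(hd0 _ _).1 h]; exact (hd0 _ _).2 rfl)
    calc G (d (T (T^[n] u)) (T (T^[n] v))) ≤ φ (G (d (T^[n] u) (T^[n] v))) := hcontr _ _ hne
      _ ≤ φ (φ^[n] b) :=
        hφmono _ _ (hGpos _ ((hnn _ _).lt_of_ne' hprev))
          (G_dist_iterate_le hnn hd0 hGpos hφmono hcontr hb n hprev)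
      _ = φ^[n + 1] b := (Function.iterate_succ_apply' φ n b).symm

theorem tendsto_zero_of_G_le
    (hG2 : ∀ α : ℕ → ℝ, (∀ n, 0 < α n) →
      (Tendsto (fun n => G (α n)) atTop (𝓝 0) ↔ Tendsto α atTop (𝓝 0)))
    (hGpos : ∀ t, 0 < t → 0 < G t) {α β : ℕ → ℝ} (hα : ∀ k, 0 ≤ α k)
    (hβ : Tendsto β atTop (𝓝 0)) (hαβ : ∀ k, α k ≠ 0 → G (α k) ≤ β k) :
    Tendsto α atTop (𝓝 0) := by
  -- `hG2` only speaks about positive sequences, so the zeros of `α` are replaced by `1/(k+1)`.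
  set α' : ℕ → ℝ := fun k => if α k = 0 then 1 / ((k : ℝ) + 1) else α k
  have hα'pos : ∀ k, 0 < α' k := fun k => by
    by_cases h : α k = 0
    · simp only [α', if_pos h]; positivity
    · simp only [α', if_neg h]; exact (hα k).lt_of_ne' h
  have hrecip : Tendsto (fun k : ℕ => G (1 / ((k : ℝ) + 1))) atTop (𝓝 0) :=
    (hG2 (fun k : ℕ => 1 / ((k : ℝ) + 1)) fun k => by positivity).2
      tendsto_one_div_add_atTop_nhds_zero_nat
  have hGα' : Tendsto (fun k => G (α' k)) atTop (𝓝 0) := by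
    refine squeeze_zero (g := fun k => max (β k) (G (1 / ((k : ℝ) + 1))))
      (fun k => (hGpos _ (hα'pos k)).le) (fun k => ?_) (by simpa using hβ.max hrecip)
    by_cases h : α k = 0
    · simp only [α', if_pos h]; exact le_max_right _ _
    · simp only [α', if_neg h]; exact (hαβ k h).trans (le_max_left _ _)
  refine squeeze_zero hα (fun k => ?_) ((hG2 _ hα'pos).1 hGα')
  by_cases h : α k = 0
  · rw [h]; exact (hα'pos k).le
  · simp only [α', if_neg h, le_refl]

theorem tendsto_dist_iterate_succ (hnn : ∀ x y, 0 ≤ d x y) (hd0 : ∀ x y, d x y = 0 ↔ x = y)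
    (hGpos : ∀ t, 0 < t → 0 < G t)
    (hG2 : ∀ α : ℕ → ℝ, (∀ n, 0 < α n) →
      (Tendsto (fun n => G (α n)) atTop (𝓝 0) ↔ Tendsto α atTop (𝓝 0)))
    (hφmono : ∀ a b, 0 < a → a ≤ b → φ a ≤ φ b)
    (hφiter : ∀ t, 0 < t → Tendsto (fun n => φ^[n] t) atTop (𝓝 0))
    (hcontr : ∀ x y, d (T x) (T y) ≠ 0 → G (d (T x) (T y)) ≤ φ (G (d x y))) (x : X) :
    Tendsto (fun k => d (T^[k] x) (T^[k + 1] x)) atTop (𝓝 0) := by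
  refine tendsto_zero_of_G_le hG2 hGpos (fun k => hnn _ _)
    (β := fun k => φ^[k] (max (G (d x (T x))) 1)) (hφiter _ (lt_max_of_lt_right one_pos)) fun k hk => ?_
  rw [Function.iterate_succ_apply] at hk ⊢
  exact G_dist_iterate_le hnn hd0 hGpos hφmono hcontr (le_max_left _ 1) k hk

theorem tendsto_dist_add_of_tendsto_dist_succ (hnn : ∀ x y, 0 ≤ d x y)
    (hd0 : ∀ x y, d x y = 0 ↔ x = y) (htri : ∀ x y z, d x y ≤ s * (d x z + d z y))
    {x : ℕ → X} (hx : Tendsto (fun k => d (x k) (x (k + 1))) atTop (𝓝 0)) :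
    ∀ N, Tendsto (fun p => d (x p) (x (p + N))) atTop (𝓝 0)
  | 0 => by simpa only [add_zero, (hd0 _ _).2] using tendsto_const_nhds
  | N + 1 => by
    have hnext := (tendsto_dist_add_of_tendsto_dist_succ hnn hd0 htri hx N).comp
      (tendsto_add_atTop_nat 1)
    refine squeeze_zero (fun p => hnn _ _) (fun p => ?_)
      (by simpa using (hx.add hnext).const_mul s)
    simpa only [Function.comp_apply, Nat.add_right_comm _ 1 N, add_assoc] using htri _ _ (x (p + 1))

theorem exists_mul_lt_of_tendsto_zero {f : ℕ → ℝ} (hf : Tendsto f atTop (𝓝 0)) {n : ℕ}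
    (hn : 1 ≤ n) {δ : ℝ} (hδ : 0 < δ) : ∃ m, 1 ≤ m ∧ f (m * n) < δ :=
  ((eventually_ge_atTop 1).and ((hf.comp (tendsto_atTop_mono
    (fun m => Nat.le_mul_of_pos_right m hn) tendsto_id)).eventually (gt_mem_nhds hδ))).exists

theorem dist_iterate_lt (hnn : ∀ x y, 0 ≤ d x y) (hd0 : ∀ x y, d x y = 0 ↔ x = y)
    (hGpos : ∀ t, 0 < t → 0 < G t) (hφmono : ∀ a b, 0 < a → a ≤ b → φ a ≤ φ b)
    (hcontr : ∀ x y, d (T x) (T y) ≠ 0 → G (d (T x) (T y)) ≤ φ (G (d x y)))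
    {δ c b : ℝ} (hδ : 0 < δ) (hc : ∀ α, δ ≤ α → c ≤ G α) {n : ℕ} (hn : φ^[n] b < c)
    {u v : X} (hb : G (d u v) ≤ b) : d (T^[n] u) (T^[n] v) < δ := by
  by_contra! hfar
  have hG := G_dist_iterate_le hnn hd0 hGpos hφmono hcontr hb n (hδ.trans_le hfar).ne'
  linarith [hc _ hfar]

end

theorem invariant_ball_general
    {X : Type*} (d : X → X → ℝ) (s : ℝ) (hs : 1 ≤ s)
    (hnn : ∀ x y, 0 ≤ d x y)
    (hd0 : ∀ x y, d x y = 0 ↔ x = y)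
    (hsymm : ∀ x y, d x y = d y x)
    (htri : ∀ x y z, d x y ≤ s * (d x z + d z y))
    (G : ℝ → ℝ) (hGpos : ∀ t, 0 < t → 0 < G t)
    (hG2 : ∀ α : ℕ → ℝ, (∀ n, 0 < α n) →
      (Tendsto (fun n => G (α n)) atTop (nhds 0) ↔ Tendsto α atTop (nhds 0)))
    (φ : ℝ → ℝ)
    (hφmono : ∀ a b, 0 < a → a ≤ b → φ a ≤ φ b)
    (hφiter : ∀ t, 0 < t → Tendsto (fun n => φ^[n] t) atTop (nhds 0))
    (T : X → X)
    (hcontr : ∀ x y, d (T x) (T y) ≠ 0 → G (d (T x) (T y)) ≤ φ (G (d x y)))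
    (ε₀ : ℝ)
    (hsup : ∀ ε, 0 < ε → ε < ε₀ → ∀ α, 0 < α → α < ε → G α ≤ 1)
    (hinf : ∀ ε, 0 < ε → ε < ε₀ → ∃ c : ℝ, 0 < c ∧ ∀ α, ε ≤ α → c ≤ G α)
    (x₀ : X) :
    ∀ ε, 0 < ε → ε < ε₀ → ∃ n : ℕ, 1 ≤ n ∧ ∃ m : ℕ, 1 ≤ m ∧
      ∀ u : X, d u (T^[m * n] x₀) < ε → d (T^[n] u) (T^[m * n] x₀) < ε := by
  intro ε hε hεε₀
  set δ := ε / (2 * s)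
  have hδ : 0 < δ := by positivity
  have hδε : δ < ε := div_lt_self hε (by linarith)
  obtain ⟨c, hc, hcG⟩ := hinf δ hδ (hδε.trans hεε₀)
  obtain ⟨n, hn, hφn⟩ :=
    ((eventually_ge_atTop 1).and ((hφiter 1 one_pos).eventually (gt_mem_nhds hc))).exists
  obtain ⟨m, hm, hcentre⟩ := exists_mul_lt_of_tendsto_zero
    (tendsto_dist_add_of_tendsto_dist_succ hnn hd0 htri
      (tendsto_dist_iterate_succ hnn hd0 hGpos hG2 hφmono hφiter hcontr x₀) n) hn hδ
  rw [add_comm, Function.iterate_add_apply, hsymm] at hcentre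
  refine ⟨n, hn, m, hm, fun u hu => ?_⟩
  have hnear : d (T^[n] u) (T^[n] (T^[m * n] x₀)) < δ := by
    rcases eq_or_ne u (T^[m * n] x₀) with rfl | hne
    · rwa [(hd0 _ _).2 rfl]
    · exact dist_iterate_lt hnn hd0 hGpos hφmono hcontr hδ hcG hφn
        (hsup ε hε hεε₀ _ ((hnn _ _).lt_of_ne' (mt (hd0 _ _).1 hne)) hu)
  calc d (T^[n] u) (T^[m * n] x₀)
      ≤ s * (d (T^[n] u) (T^[n] (T^[m * n] x₀)) + d (T^[n] (T^[m * n] x₀)) (T^[m * n] x₀)) :=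
        htri _ _ _
    _ < s * (δ + δ) := by gcongr
    _ = ε := by simp only [δ]; field_simp; ring

/-- Invariant ball lemma. -/
theorem invariant_ball
    {X : Type*} (d : X → X → ℝ) (s : ℝ) (hs : 1 ≤ s)
    (hnn : ∀ x y, 0 ≤ d x y)
    (hd0 : ∀ x y, d x y = 0 ↔ x = y)
    (hsymm : ∀ x y, d x y = d y x)
    (htri : ∀ x y z, d x y ≤ s * (d x z + d z y))
    (G : ℝ → ℝ) (hGpos : ∀ t, 0 < t → 0 < G t)
    (hG2 : ∀ α : ℕ → ℝ, (∀ n, 0 < α n) →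
      (Tendsto (fun n => G (α n)) atTop (nhds 0) ↔ Tendsto α atTop (nhds 0)))
    (φ : ℝ → ℝ) (hφpos : ∀ t, 0 < t → 0 < φ t)
    (hφmono : ∀ a b, 0 < a → a ≤ b → φ a ≤ φ b)
    (hφiter : ∀ t, 0 < t → Tendsto (fun n => φ^[n] t) atTop (nhds 0))
    (T : X → X)
    (hcontr : ∀ x y, d (T x) (T y) ≠ 0 → G (d (T x) (T y)) ≤ φ (G (d x y)))
    (ε₀ : ℝ) (hε₀ : 0 < ε₀)
    (hsup : ∀ ε, 0 < ε → ε < ε₀ → ∀ α, 0 < α → α < ε → G α ≤ 1)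
    (hinf : ∀ ε, 0 < ε → ε < ε₀ → ∃ c : ℝ, 0 < c ∧ ∀ α, ε ≤ α → c ≤ G α)
    (x₀ : X) :
    ∀ ε, 0 < ε → ε < ε₀ → ∃ n : ℕ, 1 ≤ n ∧ ∃ m : ℕ, 1 ≤ m ∧
      ∀ u : X, d u (T^[m * n] x₀) < ε → d (T^[n] u) (T^[m * n] x₀) < ε :=
  invariant_ball_general d s hs hnn hd0 hsymm htri G hGpos hG2 φ hφmono hφiter T hcontr ε₀ hsup hinf
    x₀
end
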